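/- Let H be a symmetric positive semidefinite d×d matrix with αH ≤ I for some α > 0, and θ* ∈ ℝᵈ. Define a_k = (I - (I - αH)^k) θ* for k ≥ 0 and ā_k = (a₀ + ⋯ + a_{k-1})/k. Then for every k ≥ 1, (ā_k - θ*)ᵀ H (ā_k - θ*) ≤ ‖θ*‖²/(α k). -/

import Mathlib

/-!
Write `B = 1 - αH`, so that `0 ≤ B ≤ 1` in the Loewner order, and `S = ∑_{i<k} Bⁱ`. Then
`ā_k - θ* = -S θ* / k`, and since `S (1 - B) = 1 - Bᵏ`,
`α · S H S = (1 - Bᵏ) S = ∑_{i<k} (Bⁱ - Bᵏ⁺ⁱ) ≤ ∑_{i<k} Bⁱ ≤ k`,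
because commuting positive semidefinite matrices have a positive semidefinite product. Hence
`α (ā_k - θ*)ᵀ H (ā_k - θ*) = α θ*ᵀ S H S θ* / k² ≤ ‖θ*‖² / k`.
-/

open Matrix Finset
open scoped MatrixOrder ComplexOrder

namespace StarOrderedRing

variable {A : Type*} [Ring A] [PartialOrder A] [StarRing A] [StarOrderedRing A]
  [TopologicalSpace A] [Module ℝ A] [IsScalarTower ℝ A A] [SMulCommClass ℝ A A]
  [NonUnitalContinuousFunctionalCalculus ℝ A IsSelfAdjoint] [NonnegSpectrumClass ℝ A] {b : A}

theorem pow_nonneg (hb : 0 ≤ b) (n : ℕ) : 0 ≤ b ^ n := by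
  induction n with
  | zero => simp
  | succ n ih => rw [pow_succ]; exact (Commute.self_pow b n).symm.mul_nonneg ih hb

theorem pow_le_one (hb₀ : 0 ≤ b) (hb₁ : b ≤ 1) (n : ℕ) : b ^ n ≤ 1 := by
  induction n with
  | zero => simp
  | succ n ih =>
    have hcomm : Commute b (1 - b ^ n) := (Commute.one_right b).sub_right (Commute.self_pow b n)
    calc b ^ (n + 1) = b - b * (1 - b ^ n) := by rw [mul_sub, mul_one, pow_succ']; abel
      _ ≤ b := sub_le_self _ (hcomm.mul_nonneg hb₀ (sub_nonneg.2 ih))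
      _ ≤ 1 := hb₁

theorem geom_sum_mul_one_sub_mul_geom_sum_le (hb₀ : 0 ≤ b) (hb₁ : b ≤ 1) (k : ℕ) :
    (∑ i ∈ range k, b ^ i) * (1 - b) * ∑ i ∈ range k, b ^ i ≤ k • (1 : A) := by
  have hterm (i : ℕ) : (1 - b ^ k) * b ^ i ≤ 1 :=
    calc (1 - b ^ k) * b ^ i = b ^ i - b ^ (k + i) := by rw [sub_mul, one_mul, pow_add]
      _ ≤ b ^ i := sub_le_self _ (pow_nonneg hb₀ _)
      _ ≤ 1 := pow_le_one hb₀ hb₁ i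
  rw [geom_sum_mul_neg, mul_sum]
  simpa using sum_le_card_nsmul (range k) _ _ fun i _ ↦ hterm i

end StarOrderedRing

namespace Matrix

variable {n : Type*} [Fintype n]

theorem dotProduct_mulVec_le_of_le {𝕜 : Type*} [RCLike 𝕜] {M N : Matrix n n 𝕜} (h : M ≤ N)
    (x : n → 𝕜) : star x ⬝ᵥ M *ᵥ x ≤ star x ⬝ᵥ N *ᵥ x := by
  simpa [sub_mulVec, dotProduct_sub] using (le_iff.mp h).dotProduct_mulVec_nonneg x

theorem star_mulVec_dotProduct_mulVec_mulVec {R : Type*} [CommRing R] [StarRing R]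
    (S M : Matrix n n R) (x : n → R) :
    star (S *ᵥ x) ⬝ᵥ M *ᵥ (S *ᵥ x) = star x ⬝ᵥ (Sᴴ * M * S) *ᵥ x := by
  simp only [star_mulVec, dotProduct_mulVec, vecMul_vecMul, mulVec_mulVec, Matrix.mul_assoc]

theorem inv_smul_mulVec_dotProduct_mulVec_le [DecidableEq n] {S H : Matrix n n ℝ} (hS : Sᴴ = S) {α : ℝ}
    (hα : 0 < α) {k : ℕ} (hk : 0 < k) (hSHS : S * (α • H) * S ≤ k • 1) (x : n → ℝ) :
    ((k : ℝ)⁻¹ • S *ᵥ x) ⬝ᵥ H *ᵥ ((k : ℝ)⁻¹ • S *ᵥ x) ≤ (x ⬝ᵥ x) / (α * k) := by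
  have hcongr : (S *ᵥ x) ⬝ᵥ H *ᵥ (S *ᵥ x) = x ⬝ᵥ (S * H * S) *ᵥ x := by
    have h := star_mulVec_dotProduct_mulVec_mulVec S H x
    rwa [hS, star_trivial] at h
  have hquad : α * (x ⬝ᵥ (S * H * S) *ᵥ x) ≤ k * (x ⬝ᵥ x) := by
    simpa [Matrix.mul_smul, Matrix.smul_mul, smul_mulVec] using dotProduct_mulVec_le_of_le hSHS x
  rw [mulVec_smul, smul_dotProduct, dotProduct_smul, hcongr, smul_eq_mul, smul_eq_mul,
    le_div_iff₀ (by positivity)]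
  calc (k : ℝ)⁻¹ * ((k : ℝ)⁻¹ * (x ⬝ᵥ (S * H * S) *ᵥ x)) * (α * k)
      = α * (x ⬝ᵥ (S * H * S) *ᵥ x) / k := by field_simp
    _ ≤ k * (x ⬝ᵥ x) / k := by gcongr
    _ = x ⬝ᵥ x := by field_simp

end Matrix

theorem bias_bound (d : ℕ) (H : Matrix (Fin d) (Fin d) ℝ)
    (hH : H.PosSemidef) (α : ℝ) (hα : 0 < α)
    (hle : ((1 : Matrix (Fin d) (Fin d) ℝ) - α • H).PosSemidef)
    (θs : Fin d → ℝ) (a : ℕ → (Fin d → ℝ))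
    (ha : ∀ k, a k = ((1 : Matrix (Fin d) (Fin d) ℝ) - (1 - α • H) ^ k) *ᵥ θs)
    (abar : ℕ → (Fin d → ℝ))
    (habar : ∀ k, abar k = (k : ℝ)⁻¹ • ∑ i ∈ Finset.range k, a i) :
    ∀ k : ℕ, 1 ≤ k →
      (abar k - θs) ⬝ᵥ H *ᵥ (abar k - θs) ≤ (θs ⬝ᵥ θs) / (α * k) := by
  intro k hk
  have hB₁ : 1 - α • H ≤ 1 := by
    rw [le_iff, sub_sub_cancel]
    exact hH.smul hα.le
  have hSHS := StarOrderedRing.geom_sum_mul_one_sub_mul_geom_sum_le hle.nonneg hB₁ k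
  rw [sub_sub_cancel] at hSHS
  have hS : (∑ i ∈ range k, (1 - α • H) ^ i)ᴴ = ∑ i ∈ range k, (1 - α • H) ^ i := by
    simp only [conjTranspose_sum, (hle.isHermitian.pow _).eq]
  have hdev : abar k - θs = -((k : ℝ)⁻¹ • (∑ i ∈ range k, (1 - α • H) ^ i) *ᵥ θs) := by
    simp only [habar, ha, sub_mulVec, one_mulVec, sum_sub_distrib, sum_const, card_range,
      ← sum_mulVec]
    rw [smul_sub, ← Nat.cast_smul_eq_nsmul ℝ, inv_smul_smul₀ (by positivity)]
    abel
  rw [hdev, mulVec_neg, dotProduct_neg, neg_dotProduct, neg_neg]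
  exact inv_smul_mulVec_dotProduct_mulVec_le hS hα hk hSHS θs
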